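/- arXiv:1804.08111 — 5 statements merged into one kernel-verified Lean document; each statement's English description precedes it below -/
import Mathlib

section
/- Let p ∈ (0,1), q ≥ 1, and ε ∈ (0, 1/q). Let G = (V,E) be a finite graph and u, v vertices with {u,v} ∉ E such that φ_G(u↔v) ≤ ε, and let G' = (V, E ∪ {{u,v}}). Sample Y ⊆ E ∪ {{u,v}} as follows: sample X ⊆ E according to the random-cluster distribution φ_G with parameters p, q, and then set Y = X ∪ {{u,v}} with probability p/(p+(1−p)q) and Y = X otherwise. Then the distribution ν_Y of Y satisfies ‖ν_Y − φ_{G'}‖_TV ≤ 2qε, where φ_{G'} is the random-cluster distribution on G' with parameters p, q and ‖·‖_TV denotes total variation distance. -/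
/-!
Write `e = s(u, v)`, `w = rcW E p q`, `Z = rcZ E p q` and `D = p + (1 - p) q`. Up to the factor
`D Z`, the law of `Y` is `(1 - p) q w S` at `S` and `p w S` at `S ∪ {e}`. On the other side,
`q` times the random-cluster weight of `G'` is `q (1 - p) w S` at `S`, and at `S ∪ {e}` it is
`p w S` when `e` merges two clusters of `S` and `q p w S` when `S` already connects `u` and `v`.
So the two unnormalised measures differ only at connecting `S`, by `(q - 1) p Z φ_G(u ↔ v)`
in total, and normalising at most doubles an `ℓ¹` distance: `‖ν_Y - φ_{G'}‖ ≤ (q - 1) p ε / D ≤ q ε`.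
-/

open scoped Classical

/-- Number of connected components of the spanning subgraph of `V` with edge set `S`
(isolated vertices count). -/
noncomputable def rcK {V : Type} [Fintype V] (S : Finset (Sym2 V)) : ℕ :=
  Nat.card (SimpleGraph.fromEdgeSet (↑S : Set (Sym2 V))).ConnectedComponent

/-- Random-cluster weight of the configuration `S ⊆ E`. -/
noncomputable def rcW {V : Type} [Fintype V] (E : Finset (Sym2 V)) (p q : ℝ)
    (S : Finset (Sym2 V)) : ℝ :=
  p ^ S.card * (1 - p) ^ (E \ S).card * q ^ rcK S

/-- Random-cluster partition function. -/
noncomputable def rcZ {V : Type} [Fintype V] (E : Finset (Sym2 V)) (p q : ℝ) : ℝ :=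
  ∑ S ∈ E.powerset, rcW E p q S

/-- Random-cluster probability of the configuration `S ⊆ E`. -/
noncomputable def rcP {V : Type} [Fintype V] (E : Finset (Sym2 V)) (p q : ℝ)
    (S : Finset (Sym2 V)) : ℝ :=
  rcW E p q S / rcZ E p q

lemma sum_abs_div_sum_sub_div_sum_le {ι : Type*} (s : Finset ι) (a b : ι → ℝ)
    (ha : 0 < ∑ i ∈ s, a i) (hb : ∀ i ∈ s, 0 ≤ b i) (hb' : 0 < ∑ i ∈ s, b i) :
    ∑ i ∈ s, |a i / ∑ j ∈ s, a j - b i / ∑ j ∈ s, b j|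
      ≤ 2 * (∑ i ∈ s, |a i - b i|) / ∑ i ∈ s, a i := by
  set α := ∑ i ∈ s, a i
  set β := ∑ i ∈ s, b i
  have hpoint : ∀ i ∈ s, |a i / α - b i / β| ≤ |a i - b i| / α + b i * |1 / α - 1 / β| := by
    intro i hi
    calc |a i / α - b i / β| = |(a i - b i) / α + b i * (1 / α - 1 / β)| := by ring_nf
      _ ≤ |(a i - b i) / α| + |b i * (1 / α - 1 / β)| := abs_add_le _ _
      _ = |a i - b i| / α + b i * |1 / α - 1 / β| := by
        rw [abs_div, abs_of_pos ha, abs_mul, abs_of_nonneg (hb i hi)]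
  have hmass : β * |1 / α - 1 / β| = |β - α| / α := by
    rw [div_sub_div _ _ ha.ne' hb'.ne', abs_div, abs_of_pos (mul_pos ha hb')]
    field_simp
  have hmass_le : |β - α| ≤ ∑ i ∈ s, |a i - b i| := by
    rw [← Finset.sum_sub_distrib]
    refine (Finset.abs_sum_le_sum_abs _ _).trans (le_of_eq ?_)
    exact Finset.sum_congr rfl fun i _ => abs_sub_comm _ _
  calc ∑ i ∈ s, |a i / α - b i / β|
      ≤ ∑ i ∈ s, (|a i - b i| / α + b i * |1 / α - 1 / β|) := Finset.sum_le_sum hpoint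
    _ = (∑ i ∈ s, |a i - b i|) / α + |β - α| / α := by
      rw [Finset.sum_add_distrib, ← Finset.sum_div, ← Finset.sum_mul, hmass]
    _ ≤ 2 * (∑ i ∈ s, |a i - b i|) / α := by
      rw [← add_div, two_mul]
      gcongr

namespace SimpleGraph

variable {V : Type*} (G : SimpleGraph V) {u v : V}

lemma reachable_sup_edge_iff {x y : V} :
    (G ⊔ edge u v).Reachable x y ↔
      G.Reachable x y ∨ (G.Reachable x u ∧ G.Reachable v y) ∨
        (G.Reachable x v ∧ G.Reachable u y) := by
  constructor
  · rw [reachable_iff_reflTransGen]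
    intro h
    induction h with
    | refl => exact .inl .rfl
    | tail _ hbc ih =>
      rcases hbc with hG | hE
      · rcases ih with h | ⟨h1, h2⟩ | ⟨h1, h2⟩
        · exact .inl (h.trans hG.reachable)
        · exact .inr (.inl ⟨h1, h2.trans hG.reachable⟩)
        · exact .inr (.inr ⟨h1, h2.trans hG.reachable⟩)
      · rcases ((edge_adj _ _ _ _).mp hE).1 with ⟨rfl, rfl⟩ | ⟨rfl, rfl⟩ <;>
          rcases ih with h | ⟨h1, h2⟩ | ⟨h1, h2⟩ <;> tauto
  · have huv : (G ⊔ edge u v).Reachable u v := by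
      rcases eq_or_ne u v with rfl | hne
      · exact .rfl
      · exact Adj.reachable (.inr (by simp [edge_adj, hne]))
    have hG : G ≤ G ⊔ edge u v := le_sup_left
    rintro (h | ⟨h1, h2⟩ | ⟨h1, h2⟩)
    · exact h.mono hG
    · exact ((h1.mono hG).trans huv).trans (h2.mono hG)
    · exact ((h1.mono hG).trans huv.symm).trans (h2.mono hG)

lemma card_connectedComponent_sup_edge_of_reachable (h : G.Reachable u v) :
    Nat.card (G ⊔ edge u v).ConnectedComponent = Nat.card G.ConnectedComponent := by
  refine (Nat.card_eq_of_bijective _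
    ⟨?_, ConnectedComponent.surjective_map_ofLE le_sup_left⟩).symm
  refine ConnectedComponent.ind₂ fun x y hxy => ?_
  simp only [ConnectedComponent.map_mk, Hom.ofLE_apply, ConnectedComponent.eq] at hxy ⊢
  rcases (G.reachable_sup_edge_iff).mp hxy with hxy | ⟨h1, h2⟩ | ⟨h1, h2⟩
  · exact hxy
  · exact (h1.trans h).trans h2
  · exact (h1.trans h.symm).trans h2

lemma card_connectedComponent_sup_edge_add_one [Finite V] (h : ¬G.Reachable u v) :
    Nat.card (G ⊔ edge u v).ConnectedComponent + 1 = Nat.card G.ConnectedComponent := by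
  classical
  let m := ConnectedComponent.map (Hom.ofLE (le_sup_left : G ≤ G ⊔ edge u v))
  have hbij : Function.Bijective
      fun c : {c : G.ConnectedComponent // c ≠ G.connectedComponentMk v} => m c.1 := by
    constructor
    · rintro ⟨c, hc⟩ ⟨d, hd⟩ hcd
      induction c using ConnectedComponent.ind
      induction d using ConnectedComponent.ind
      simp only [m, ConnectedComponent.map_mk, Hom.ofLE_apply, ConnectedComponent.eq,
        Subtype.mk.injEq, ne_eq] at hcd hc hd ⊢
      rcases (G.reachable_sup_edge_iff).mp hcd with hxy | ⟨_, h2⟩ | ⟨h1, _⟩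
      · exact hxy
      · exact absurd h2.symm hd
      · exact absurd h1 hc
    · refine ConnectedComponent.ind fun x => ?_
      by_cases hvx : G.Reachable v x
      · refine ⟨⟨G.connectedComponentMk u, by simpa using h⟩, ?_⟩
        simp only [m, ConnectedComponent.map_mk, Hom.ofLE_apply, ConnectedComponent.eq]
        exact (G.reachable_sup_edge_iff).mpr (.inr (.inl ⟨.rfl, hvx⟩))
      · exact ⟨⟨G.connectedComponentMk x, by simpa [eq_comm] using hvx⟩, rfl⟩
  rw [← Nat.card_eq_of_bijective _ hbij, ← Finite.card_option,
    Nat.card_congr (Equiv.optionSubtypeNe (G.connectedComponentMk v))]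

lemma fromEdgeSet_insert_eq_sup_edge (u v : V) (S : Finset (Sym2 V)) :
    fromEdgeSet (↑(insert s(u, v) S) : Set (Sym2 V)) = fromEdgeSet ↑S ⊔ edge u v := by
  rw [Finset.coe_insert, Set.insert_eq, fromEdgeSet_union, sup_comm]
  rfl

end SimpleGraph

open SimpleGraph

section RandomCluster

variable {V : Type} [Fintype V]

lemma rcK_insert_of_reachable {u v : V} {S : Finset (Sym2 V)}
    (h : (fromEdgeSet (↑S : Set (Sym2 V))).Reachable u v) :
    rcK (insert s(u, v) S) = rcK S := by
  rw [rcK, rcK, fromEdgeSet_insert_eq_sup_edge]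
  exact card_connectedComponent_sup_edge_of_reachable _ h

lemma rcK_insert_add_one_of_not_reachable {u v : V} {S : Finset (Sym2 V)}
    (h : ¬(fromEdgeSet (↑S : Set (Sym2 V))).Reachable u v) :
    rcK (insert s(u, v) S) + 1 = rcK S := by
  rw [rcK, rcK, fromEdgeSet_insert_eq_sup_edge]
  exact card_connectedComponent_sup_edge_add_one _ h

lemma rcW_pos {E : Finset (Sym2 V)} {p q : ℝ} (hp : p ∈ Set.Ioo 0 1) (hq : 0 < q)
    (S : Finset (Sym2 V)) : 0 < rcW E p q S := by
  have := hp.1; have := sub_pos.mpr hp.2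
  unfold rcW; positivity

lemma rcZ_pos {E : Finset (Sym2 V)} {p q : ℝ} (hp : p ∈ Set.Ioo 0 1) (hq : 0 < q) :
    0 < rcZ E p q :=
  Finset.sum_pos (fun S _ => rcW_pos hp hq S) (Finset.powerset_nonempty _)

lemma rcP_pos {E : Finset (Sym2 V)} {p q : ℝ} (hp : p ∈ Set.Ioo 0 1) (hq : 0 < q)
    (S : Finset (Sym2 V)) : 0 < rcP E p q S :=
  div_pos (rcW_pos hp hq S) (rcZ_pos hp hq)

variable {E S : Finset (Sym2 V)} {e : Sym2 V} (p q : ℝ)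

lemma rcW_insert_of_subset (hS : S ⊆ E) (he : e ∉ E) :
    rcW (insert e E) p q S = (1 - p) * rcW E p q S := by
  rw [rcW, rcW, Finset.insert_sdiff_of_notMem _ (fun h => he (hS h)),
    Finset.card_insert_of_notMem (fun h => he (Finset.mem_sdiff.mp h).1)]
  ring

lemma rcW_insert_insert (hS : S ⊆ E) (he : e ∉ E) :
    rcW (insert e E) p q (insert e S)
      = p * p ^ S.card * (1 - p) ^ (E \ S).card * q ^ rcK (insert e S) := by
  rw [rcW, Finset.insert_sdiff_insert, Finset.sdiff_insert_of_notMem he,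
    Finset.card_insert_of_notMem (fun h => he (hS h))]
  ring

lemma rcW_insert_insert_of_reachable {u v : V} (hS : S ⊆ E) (he : s(u, v) ∉ E)
    (h : (fromEdgeSet (↑S : Set (Sym2 V))).Reachable u v) :
    rcW (insert s(u, v) E) p q (insert s(u, v) S) = p * rcW E p q S := by
  rw [rcW_insert_insert p q hS he, rcK_insert_of_reachable h, rcW]
  ring

lemma rcW_insert_insert_of_not_reachable {u v : V} (hS : S ⊆ E) (he : s(u, v) ∉ E)
    (h : ¬(fromEdgeSet (↑S : Set (Sym2 V))).Reachable u v) :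
    q * rcW (insert s(u, v) E) p q (insert s(u, v) S) = p * rcW E p q S := by
  rw [rcW_insert_insert p q hS he, rcW, ← rcK_insert_add_one_of_not_reachable h]
  ring

end RandomCluster

section Sampling

variable {V : Type} [Fintype V]

/-- `(p + (1 - p) q) · rcZ E p q` times the law of `Y`: add `e` to a sample of `rcP E p q`
with probability `p / (p + (1 - p) q)`. -/
noncomputable def sampledW (E : Finset (Sym2 V)) (e : Sym2 V) (p q : ℝ) (T : Finset (Sym2 V)) : ℝ :=
  if e ∈ T then p * rcW E p q (T.erase e) else (1 - p) * q * rcW E p q T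

variable {E : Finset (Sym2 V)} {p q : ℝ}

lemma sampling_denom_pos (hp : p ∈ Set.Ioo 0 1) (hq : 0 < q) : 0 < p + (1 - p) * q := by
  have := hp.1; have := sub_pos.mpr hp.2
  positivity

lemma sum_sampledW {e : Sym2 V} (he : e ∉ E) :
    ∑ T ∈ (insert e E).powerset, sampledW E e p q T = (p + (1 - p) * q) * rcZ E p q := by
  rw [Finset.sum_powerset_insert he, rcZ, Finset.mul_sum, ← Finset.sum_add_distrib]
  refine Finset.sum_congr rfl fun S hS => ?_
  have heS : e ∉ S := fun h => he (Finset.mem_powerset.mp hS h)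
  rw [sampledW, sampledW, if_neg heS, if_pos (Finset.mem_insert_self _ _),
    Finset.erase_insert heS]
  ring

lemma sum_abs_sampledW_sub {u v : V} (hp : p ∈ Set.Ioo 0 1) (hq : 1 ≤ q) (he : s(u, v) ∉ E) :
    ∑ T ∈ (insert s(u, v) E).powerset,
        |sampledW E s(u, v) p q T - q * rcW (insert s(u, v) E) p q T|
      = (q - 1) * p * rcZ E p q * ∑ S ∈ E.powerset,
          if (fromEdgeSet (↑S : Set (Sym2 V))).Reachable u v then rcP E p q S else 0 := by
  rw [Finset.sum_powerset_insert he, ← Finset.sum_add_distrib, Finset.mul_sum]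
  refine Finset.sum_congr rfl fun S hS => ?_
  have hSE := Finset.mem_powerset.mp hS
  have heS : s(u, v) ∉ S := fun h => he (hSE h)
  rw [sampledW, sampledW, if_neg heS, if_pos (Finset.mem_insert_self _ _),
    Finset.erase_insert heS, rcW_insert_of_subset p q hSE he]
  rw [show (1 - p) * q * rcW E p q S - q * ((1 - p) * rcW E p q S) = 0 by ring, abs_zero,
    zero_add]
  split_ifs with h
  · have hq0 : 0 < q := one_pos.trans_le hq
    have hW := rcW_pos (E := E) hp hq0 S
    rw [rcW_insert_insert_of_reachable p q hSE he h, abs_sub_comm, rcP, mul_assoc _ (rcZ E p q),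
      mul_div_cancel₀ _ (rcZ_pos hp hq0).ne',
      show q * (p * rcW E p q S) - p * rcW E p q S = (q - 1) * p * rcW E p q S by ring]
    have := hp.1; have := sub_nonneg.mpr hq
    exact abs_of_nonneg (by positivity)
  · rw [rcW_insert_insert_of_not_reachable p q hSE he h, sub_self, abs_zero, mul_zero]

lemma ite_mem_rcP_eq_sampledW_div (hp : p ∈ Set.Ioo 0 1) (hq : 0 < q) (e : Sym2 V)
    (T : Finset (Sym2 V)) :
    (if e ∈ T then (p / (p + (1 - p) * q)) * rcP E p q (T.erase e)
        else (1 - p / (p + (1 - p) * q)) * rcP E p q T)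
      = sampledW E e p q T / ((p + (1 - p) * q) * rcZ E p q) := by
  have hD := (sampling_denom_pos hp hq).ne'
  have hZ := (rcZ_pos (E := E) hp hq).ne'
  rw [sampledW]
  split_ifs
  · rw [rcP]; field_simp
  · rw [rcP]; field_simp; ring

lemma sum_abs_sampledW_div_sub_rcP_le {u v : V} (hp : p ∈ Set.Ioo 0 1) (hq : 1 ≤ q)
    (he : s(u, v) ∉ E) :
    ∑ T ∈ (insert s(u, v) E).powerset,
        |sampledW E s(u, v) p q T / ((p + (1 - p) * q) * rcZ E p q)
          - rcP (insert s(u, v) E) p q T|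
      ≤ 2 * ((q - 1) * p * rcZ E p q * ∑ S ∈ E.powerset,
          if (fromEdgeSet (↑S : Set (Sym2 V))).Reachable u v then rcP E p q S else 0)
        / ((p + (1 - p) * q) * rcZ E p q) := by
  have hq0 : 0 < q := one_pos.trans_le hq
  have key := sum_abs_div_sum_sub_div_sum_le (insert s(u, v) E).powerset (sampledW E s(u, v) p q)
    (fun T => q * rcW (insert s(u, v) E) p q T) ?_
    (fun T _ => mul_nonneg hq0.le (rcW_pos hp hq0 T).le) ?_
  · simp only [sum_sampledW he, sum_abs_sampledW_sub hp hq he, ← Finset.mul_sum,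
      mul_div_mul_left _ _ hq0.ne'] at key
    exact key
  · rw [sum_sampledW he]
    exact mul_pos (sampling_denom_pos hp hq0) (rcZ_pos hp hq0)
  · rw [← Finset.mul_sum]
    exact mul_pos hq0 (rcZ_pos hp hq0)

end Sampling

theorem stmt3_general {V : Type} [Fintype V] (p : ℝ) (hp : p ∈ Set.Ioo (0 : ℝ) 1)
    (q : ℝ) (hq : 1 ≤ q) (ε : ℝ)
    (E : Finset (Sym2 V))
    (u v : V) (he : s(u, v) ∉ E)
    (hconn : (∑ S ∈ E.powerset,
        if (SimpleGraph.fromEdgeSet (↑S : Set (Sym2 V))).Reachable u v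
        then rcP E p q S else 0) ≤ ε) :
    (1 / 2) * ∑ T ∈ (insert s(u, v) E).powerset,
        |(if s(u, v) ∈ T then (p / (p + (1 - p) * q)) * rcP E p q (T.erase s(u, v))
            else (1 - p / (p + (1 - p) * q)) * rcP E p q T)
          - rcP (insert s(u, v) E) p q T| ≤ 2 * q * ε := by
  have hq0 : 0 < q := one_pos.trans_le hq
  have hD := sampling_denom_pos hp hq0
  have hZ := rcZ_pos (E := E) hp hq0
  set P := ∑ S ∈ E.powerset,
    if (fromEdgeSet (↑S : Set (Sym2 V))).Reachable u v then rcP E p q S else 0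
  have hP : 0 ≤ P := Finset.sum_nonneg fun S _ => ite_nonneg (rcP_pos hp hq0 S).le le_rfl
  calc _ = (1 / 2) * ∑ T ∈ (insert s(u, v) E).powerset,
        |sampledW E s(u, v) p q T / ((p + (1 - p) * q) * rcZ E p q)
          - rcP (insert s(u, v) E) p q T| := by
        simp only [ite_mem_rcP_eq_sampledW_div hp hq0]
    _ ≤ (1 / 2) * (2 * ((q - 1) * p * rcZ E p q * P) / ((p + (1 - p) * q) * rcZ E p q)) := by
        gcongr
        exact sum_abs_sampledW_div_sub_rcP_le hp hq he
    _ = (q - 1) * p / (p + (1 - p) * q) * P := by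
        field_simp
    _ ≤ q * P := by
        gcongr
        rw [div_le_iff₀ hD]
        nlinarith [mul_nonneg (mul_nonneg hq0.le hq0.le) (sub_pos.mpr hp.2).le, hp.1]
    _ ≤ 2 * q * ε := by nlinarith

theorem stmt3 {V : Type} [Fintype V] (p : ℝ) (hp : p ∈ Set.Ioo (0 : ℝ) 1)
    (q : ℝ) (hq : 1 ≤ q) (ε : ℝ) (hε : ε ∈ Set.Ioo (0 : ℝ) (1 / q))
    (E : Finset (Sym2 V)) (hE : ∀ e ∈ E, ¬ e.IsDiag)
    (u v : V) (huv : u ≠ v) (he : s(u, v) ∉ E)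
    (hconn : (∑ S ∈ E.powerset,
        if (SimpleGraph.fromEdgeSet (↑S : Set (Sym2 V))).Reachable u v
        then rcP E p q S else 0) ≤ ε) :
    (1 / 2) * ∑ T ∈ (insert s(u, v) E).powerset,
        |(if s(u, v) ∈ T then (p / (p + (1 - p) * q)) * rcP E p q (T.erase s(u, v))
            else (1 - p / (p + (1 - p) * q)) * rcP E p q T)
          - rcP (insert s(u, v) E) p q T| ≤ 2 * q * ε :=
  stmt3_general p hp q hq ε E u v he hconn
end

section
/- Let Δ ≥ 3 be an integer, q ≥ 1 a real, and p ∈ (0,1). Set d = Δ−1, t = p/q + 1 − p, and define f : [0,1] → ℝ by f(x) = [(t + p(1−1/q)x)^d − (t − (p/q)x)^d] / [(t + p(1−1/q)x)^d + (q−1)(t − (p/q)x)^d]. Then: (i) if p < p_c(q,Δ), the only x ∈ [0,1] satisfying f(x) = x is x = 0; and (ii) if p > p_c(q,Δ), there exists x ∈ (0,1] with f(x) = x. -/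
/-!
Put `k = p + q - p q`. Writing `x = k (y - 1) / (p (y + q - 1))`, the two bases of `rcTreeF`
become `k y / (y + q - 1)` and `k / (y + q - 1)`, so `f(x) = (y^d - 1)/(y^d + q - 1)`,
and `y ↦ x` maps `(1, ∞)` onto `(0, 1]`. In the variable `y` the fixed-point equation
`f(x) = x` reduces to `h(y) = p/(1-p)`. Since `h` is continuous on `(1, ∞)` and `h(y) ≥ y - 1`,
its values there contain `(inf h, ∞)`, while
`p < p_c ↔ p/(1-p) < inf h` and `p_c < p ↔ inf h < p/(1-p)`.
-/

/-- The function `h(y) = (y-1)(y^(Δ-1)+q-1)/(y^(Δ-1)-y)`. -/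
noncomputable def treeCritH (q : ℝ) (Δ : ℕ) (y : ℝ) : ℝ :=
  (y - 1) * (y ^ (Δ - 1) + q - 1) / (y ^ (Δ - 1) - y)

/-- The critical random-cluster parameter `p_c(q,Δ) = 1 - 1/(1 + inf_{y>1} h(y))`. -/
noncomputable def pcRC (q : ℝ) (Δ : ℕ) : ℝ :=
  1 - 1 / (1 + sInf (treeCritH q Δ '' Set.Ioi 1))

/-- The wired random-cluster recursion on the `(Δ-1)`-ary tree, with `d = Δ-1` and
`t = p/q + 1 - p`:
`f(x) = [(t+p(1-1/q)x)^d - (t-(p/q)x)^d] / [(t+p(1-1/q)x)^d + (q-1)(t-(p/q)x)^d]`. -/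
noncomputable def rcTreeF (Δ : ℕ) (q p x : ℝ) : ℝ :=
  ((p / q + 1 - p + p * (1 - 1 / q) * x) ^ (Δ - 1) -
      (p / q + 1 - p - (p / q) * x) ^ (Δ - 1)) /
    ((p / q + 1 - p + p * (1 - 1 / q) * x) ^ (Δ - 1) +
      (q - 1) * (p / q + 1 - p - (p / q) * x) ^ (Δ - 1))

open Set

section TreeCritH

variable {Δ : ℕ} {q : ℝ}

lemma lt_pow_pred {y : ℝ} (hΔ : 3 ≤ Δ) (hy : 1 < y) : y < y ^ (Δ - 1) :=
  lt_self_pow₀ hy (by omega)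

lemma sub_one_le_treeCritH (hΔ : 3 ≤ Δ) (hq : 0 ≤ q) {y : ℝ} (hy : 1 < y) :
    y - 1 ≤ treeCritH q Δ y := by
  have hden : 0 < y ^ (Δ - 1) - y := sub_pos.2 (lt_pow_pred hΔ hy)
  rw [treeCritH, le_div_iff₀ hden]
  nlinarith

lemma continuousOn_treeCritH (hΔ : 3 ≤ Δ) : ContinuousOn (treeCritH q Δ) (Ioi 1) :=
  ContinuousOn.div (by fun_prop) (by fun_prop) fun _ hy => (sub_pos.2 (lt_pow_pred hΔ hy)).ne'

lemma bddBelow_treeCritH_image (hΔ : 3 ≤ Δ) (hq : 0 ≤ q) :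
    BddBelow (treeCritH q Δ '' Ioi 1) := by
  refine ⟨0, ?_⟩
  rintro _ ⟨y, hy, rfl⟩
  linarith [sub_one_le_treeCritH hΔ hq hy, mem_Ioi.1 hy]

lemma not_bddAbove_treeCritH_image (hΔ : 3 ≤ Δ) (hq : 0 ≤ q) :
    ¬BddAbove (treeCritH q Δ '' Ioi 1) := by
  rintro ⟨b, hb⟩
  have hy : (1 : ℝ) < max 2 (b + 2) := lt_max_of_lt_left one_lt_two
  have := hb (mem_image_of_mem _ hy)
  linarith [sub_one_le_treeCritH hΔ hq hy, le_max_right 2 (b + 2)]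

lemma sInf_treeCritH_image_nonneg (hΔ : 3 ≤ Δ) (hq : 0 ≤ q) :
    0 ≤ sInf (treeCritH q Δ '' Ioi 1) :=
  le_csInf ((nonempty_Ioi).image _) <| by
    rintro _ ⟨y, hy, rfl⟩
    linarith [sub_one_le_treeCritH hΔ hq hy, mem_Ioi.1 hy]

lemma Ioi_sInf_treeCritH_image_subset (hΔ : 3 ≤ Δ) (hq : 0 ≤ q) :
    Ioi (sInf (treeCritH q Δ '' Ioi 1)) ⊆ treeCritH q Δ '' Ioi 1 :=
  (isPreconnected_Ioi.image _ (continuousOn_treeCritH hΔ)).Ioi_csInf_subset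
    (bddBelow_treeCritH_image hΔ hq) (not_bddAbove_treeCritH_image hΔ hq)

end TreeCritH

section Substitution

/-- The point `x` at which the bases of `rcTreeF Δ q p x` have ratio `y`. -/
noncomputable def rcTreeX (q p y : ℝ) : ℝ :=
  (p + q - p * q) * (y - 1) / (p * (y + q - 1))

variable {Δ : ℕ} {q p : ℝ}

lemma rcTreeF_rcTreeX (hq : q ≠ 0) (hp : p ≠ 0) {y : ℝ} (hy : y + q - 1 ≠ 0)
    (hk : p + q - p * q ≠ 0) :
    rcTreeF Δ q p (rcTreeX q p y) = (y ^ (Δ - 1) - 1) / (y ^ (Δ - 1) + q - 1) := by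
  set b := (p + q - p * q) / (y + q - 1)
  have hb : b ≠ 0 := div_ne_zero hk hy
  have hsmall : p / q + 1 - p - p / q * rcTreeX q p y = b := by
    simp only [b, rcTreeX]; field_simp; ring
  have hlarge : p / q + 1 - p + p * (1 - 1 / q) * rcTreeX q p y = y * b := by
    simp only [b, rcTreeX]; field_simp; ring
  rw [rcTreeF, hsmall, hlarge, mul_pow, ← sub_one_mul, ← add_mul,
    mul_div_mul_right _ _ (pow_ne_zero _ hb), add_sub_assoc]

lemma exists_rcTreeX_eq (hq : 0 < q) (hp0 : 0 < p) (hp1 : p < 1) {x : ℝ} (hx : x ∈ Ioc 0 1) :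
    ∃ y, 1 < y ∧ rcTreeX q p y = x := by
  obtain ⟨hx0, hx1⟩ := hx
  have hk : 0 < p + q - p * q := by nlinarith
  have hv : 0 < p + q - p * q - p * x := by nlinarith
  refine ⟨(p + q - p * q + p * (q - 1) * x) / (p + q - p * q - p * x), ?_, ?_⟩
  · rw [one_lt_div hv]
    nlinarith [mul_pos (mul_pos hp0 hq) hx0]
  · rw [rcTreeX]
    field_simp
    rw [div_eq_iff (by linarith [mul_pos hq hk])]
    ring

lemma rcTreeX_eq_iff (hΔ : 3 ≤ Δ) (hq : 0 < q) (hp0 : 0 < p) (hp1 : p < 1) {y : ℝ}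
    (hy : 1 < y) :
    rcTreeX q p y = (y ^ (Δ - 1) - 1) / (y ^ (Δ - 1) + q - 1) ↔
      treeCritH q Δ y = p / (1 - p) := by
  have hpow := lt_pow_pred hΔ hy
  rw [rcTreeX, treeCritH, div_eq_div_iff (by nlinarith) (by linarith),
    div_eq_div_iff (by linarith) (by linarith)]
  -- the first cross-multiplied equation is `q` times the second
  constructor
  · intro h
    apply mul_left_cancel₀ hq.ne'
    linear_combination h
  · intro h
    linear_combination q * h

lemma exists_fixedPoint_rcTreeF_iff (hΔ : 3 ≤ Δ) (hq : 0 < q) (hp0 : 0 < p) (hp1 : p < 1) :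
    (∃ x ∈ Ioc 0 1, rcTreeF Δ q p x = x) ↔ p / (1 - p) ∈ treeCritH q Δ '' Ioi 1 := by
  have hk : 0 < p + q - p * q := by nlinarith
  have hF (y : ℝ) (hy : 1 < y) :
      rcTreeF Δ q p (rcTreeX q p y) = (y ^ (Δ - 1) - 1) / (y ^ (Δ - 1) + q - 1) :=
    rcTreeF_rcTreeX hq.ne' hp0.ne' (by linarith) hk.ne'
  constructor
  · rintro ⟨x, hx, hfix⟩
    obtain ⟨y, hy, rfl⟩ := exists_rcTreeX_eq hq hp0 hp1 hx
    exact ⟨y, hy, (rcTreeX_eq_iff hΔ hq hp0 hp1 hy).1 ((hF y hy).symm.trans hfix).symm⟩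
  · rintro ⟨y, hy : 1 < y, hroot⟩
    have hpow := lt_pow_pred hΔ hy
    have hx := (rcTreeX_eq_iff hΔ hq hp0 hp1 hy).2 hroot
    refine ⟨rcTreeX q p y, ⟨?_, ?_⟩, (hF y hy).trans hx.symm⟩
    · exact div_pos (mul_pos hk (sub_pos.2 hy)) (mul_pos hp0 (by linarith))
    · rw [hx, div_le_one (by linarith)]
      linarith

end Substitution

lemma lt_one_sub_one_div_iff {m p : ℝ} (hm : 0 ≤ m) (hp : p < 1) :
    p < 1 - 1 / (1 + m) ↔ p / (1 - p) < m := by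
  rw [div_lt_iff₀ (sub_pos.2 hp), one_sub_div (by linarith), lt_div_iff₀ (by linarith)]
  constructor <;> intro h <;> linarith

lemma one_sub_one_div_lt_iff {m p : ℝ} (hm : 0 ≤ m) (hp : p < 1) :
    1 - 1 / (1 + m) < p ↔ m < p / (1 - p) := by
  rw [lt_div_iff₀ (sub_pos.2 hp), one_sub_div (by linarith), div_lt_iff₀ (by linarith)]
  constructor <;> intro h <;> linarith

theorem stmt6 (Δ : ℕ) (hΔ : 3 ≤ Δ) (q p : ℝ) (hq : 1 ≤ q) (hp : p ∈ Set.Ioo (0 : ℝ) 1) :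
    (p < pcRC q Δ → ∀ x ∈ Set.Icc (0 : ℝ) 1, rcTreeF Δ q p x = x → x = 0) ∧
      (pcRC q Δ < p → ∃ x ∈ Set.Ioc (0 : ℝ) 1, rcTreeF Δ q p x = x) := by
  obtain ⟨hp0, hp1⟩ := hp
  have hq0 : 0 < q := by linarith
  have hm := sInf_treeCritH_image_nonneg hΔ hq0.le
  have hfix := exists_fixedPoint_rcTreeF_iff hΔ hq0 hp0 hp1
  rw [pcRC, lt_one_sub_one_div_iff hm hp1, one_sub_one_div_lt_iff hm hp1]
  refine ⟨fun hlt x hx hx_fix => ?_,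
    fun hlt => hfix.2 (Ioi_sInf_treeCritH_image_subset hΔ hq0.le hlt)⟩
  by_contra hx0
  obtain ⟨y, hy, hroot⟩ :=
    hfix.1 ⟨x, ⟨lt_of_le_of_ne hx.1 (Ne.symm hx0), hx.2⟩, hx_fix⟩
  exact hlt.not_ge (hroot ▸ csInf_le (bddBelow_treeCritH_image hΔ hq0.le) ⟨y, hy, rfl⟩)
end

section
/- Let q > 1 be a real number, B ∈ (0,1), and X, Y > 0 be reals. Then |(B+q−1)·(X + Y/(q−1)) / (q·(X + B·Y/(q−1))) − 1| ≤ (1/q)·|Y/X − 1|. (This is the per-class partition-function ratio estimate used in the analysis of the resampling step: with X the total Potts weight of configurations in which a fixed bichromatic class U assigns the endpoints u,v the colours (c_1,c_2), and Y the total weight of those assigning them (c_1,c_1), the left-hand side is |(B+q−1)Z(U,c_1,c_2)/(qZ'(U,c_1,c_2)) − 1| and the right-hand side is (1/q)·Corr_G(U,u,v).) -/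
theorem stmt8 (q B X Y : ℝ) (hq : 1 < q) (hB : B ∈ Set.Ioo (0 : ℝ) 1)
    (hX : 0 < X) (hY : 0 < Y) :
    |(B + q - 1) * (X + Y / (q - 1)) / (q * (X + B * Y / (q - 1))) - 1| ≤
      (1 / q) * |Y / X - 1| := by
  obtain ⟨hB0, hB1⟩ := hB
  have hd : 0 < q - 1 := by linarith
  have hq0 : 0 < q := by linarith
  have hden : 0 < X + B * Y / (q - 1) := by positivity
  have key : (B + q - 1) * (X + Y / (q - 1)) / (q * (X + B * Y / (q - 1))) - 1 =
      ((1 - B) * (Y - X)) / (q * (X + B * Y / (q - 1))) := by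
    field_simp
    ring
  have key2 : Y / X - 1 = (Y - X) / X := by field_simp
  rw [key, key2, abs_div, abs_div, abs_of_pos (by positivity : (0:ℝ) < q * (X + B * Y / (q - 1))),
    abs_of_pos hX, abs_mul, abs_of_pos (by linarith : (0:ℝ) < 1 - B)]
  rw [div_le_iff₀ (by positivity)]
  have hsimp : (1:ℝ)/q * (|Y - X| / X) * (q * (X + B * Y / (q - 1))) =
      |Y - X| * (X + B * Y / (q - 1)) / X := by field_simp
  rw [hsimp, le_div_iff₀ hX]
  have habs : 0 ≤ |Y - X| := abs_nonneg _
  have h0 : 0 ≤ B * Y / (q - 1) := by positivity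
  nlinarith [mul_nonneg habs h0, mul_nonneg (mul_nonneg habs hB0.le) hX.le]
end

section
/- Let q ≥ 3 be an integer and B ∈ (0,1), and set χ = (1+B)/(B+q−1). Let P be a path with ℓ ≥ 2 vertices and endpoints u, v. Then for arbitrary colours c, c' ∈ [q], it holds that μ_P(P is bichromatic | σ_u = c, σ_v = c') ≤ (4q/B)·χ^{ℓ−2}, where μ_P is the q-state Potts distribution on the path P with parameter B. -/
/-!
Transfer matrices. The weight `B ^ (number of monochromatic edges)` of a colouring of a path is a
product of edge weights `w x y = if x = y then B else 1`, and each row of `w` restricted to a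
colour set `S` containing `x` sums to `B + #S - 1`. Peeling off the first vertex therefore gives:

* with both endpoint colours pinned, the partition function of a path with `k ≥ 1` edges is at
  least `B (B + q - 1) ^ (k - 1)` (the edge reaching the pinned colour costs at least `B ≤ 1`);
* colourings with all values in `S` have total weight exactly `#S (B + #S - 1) ^ k`.

A bichromatic colouring with first colour `c` takes values in some `{c, y}`, so the bichromatic
weight is at most `q · 2 (1 + B) ^ k ≤ 4 q (1 + B) ^ (k - 1)`, and dividing gives the bound.
-/

open scoped Classical

/-- Number of monochromatic edges of the configuration `σ` in the graph `G`. -/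
noncomputable def mEdges {W : Type} [Fintype W] (G : SimpleGraph W) {q : ℕ}
    (σ : W → Fin q) : ℕ :=
  (Finset.univ.filter fun e : Sym2 W => e ∈ G.edgeSet ∧ ∀ x ∈ e, ∀ y ∈ e, σ x = σ y).card

/-- Conditional probability of the event `A` given the event `C`, under the `q`-state
Potts distribution on `G` with parameter `B`. -/
noncomputable def pottsCond {W : Type} [Fintype W] (G : SimpleGraph W) (q : ℕ) (B : ℝ)
    (A C : Set (W → Fin q)) : ℝ :=
  (∑ σ : W → Fin q, if σ ∈ A ∧ σ ∈ C then B ^ mEdges G σ else 0) /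
    ∑ σ : W → Fin q, if σ ∈ C then B ^ mEdges G σ else 0

open Finset

lemma Fintype.sum_piFinset_fin_succ {α M : Type*} [AddCommMonoid M] {n : ℕ} (S : Finset α)
    (f : (Fin (n + 1) → α) → M) :
    ∑ σ ∈ piFinset fun _ => S, f σ = ∑ x ∈ S, ∑ τ ∈ piFinset fun _ => S, f (Fin.cons x τ) := by
  rw [← sum_product' (f := fun x τ => f (Fin.cons x τ))]
  refine sum_nbij' (fun σ => (σ 0, Fin.tail σ)) (fun p => Fin.cons p.1 p.2) ?_ ?_ ?_ ?_ ?_ <;>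
    simp [Fin.forall_fin_succ, Fin.tail]

lemma Fintype.sum_fun_fin_succ {α M : Type*} [Fintype α] [AddCommMonoid M] {n : ℕ}
    (f : (Fin (n + 1) → α) → M) : ∑ σ, f σ = ∑ x, ∑ τ, f (Fin.cons x τ) := by
  simpa only [piFinset_univ] using sum_piFinset_fin_succ univ f

lemma Finset.sum_le_sum_sum_of_forall_exists_mem {ι κ M : Type*} [AddCommMonoid M]
    [PartialOrder M] [IsOrderedAddMonoid M] {s : Finset ι} {u : Finset κ} {t : κ → Finset ι}
    {f : ι → M} (hf : ∀ i, 0 ≤ f i) (h : ∀ i ∈ s, ∃ k ∈ u, i ∈ t k) :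
    ∑ i ∈ s, f i ≤ ∑ k ∈ u, ∑ i ∈ t k, f i := by
  classical
  calc ∑ i ∈ s, f i ≤ ∑ i ∈ s, ∑ k ∈ u, if i ∈ t k then f i else 0 := by
        refine sum_le_sum fun i hi => ?_
        obtain ⟨k, hk, hik⟩ := h i hi
        refine le_of_eq_of_le (if_pos hik).symm
          (single_le_sum (f := fun k => if i ∈ t k then f i else 0) (fun k _ => ?_) hk)
        split <;> [exact hf i; exact le_rfl]
    _ = ∑ k ∈ u, ∑ i ∈ s with i ∈ t k, f i := by
        rw [sum_comm]
        simp only [sum_filter]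
    _ ≤ ∑ k ∈ u, ∑ i ∈ t k, f i :=
        sum_le_sum fun k _ => sum_le_sum_of_subset_of_nonneg (fun i hi => (mem_filter.1 hi).2)
          fun i _ _ => hf i

namespace PottsPath

variable {α : Type*} [DecidableEq α] {B : ℝ}

def edgeWeight (B : ℝ) (x y : α) : ℝ := if x = y then B else 1

lemma edgeWeight_nonneg (hB : 0 ≤ B) (x y : α) : 0 ≤ edgeWeight B x y := by
  unfold edgeWeight; split <;> [exact hB; exact zero_le_one]

lemma edgeWeight_comm (B : ℝ) (x y : α) : edgeWeight B x y = edgeWeight B y x := by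
  simp only [edgeWeight, eq_comm]

lemma sum_edgeWeight_of_mem {S : Finset α} {x : α} (hx : x ∈ S) :
    ∑ y ∈ S, edgeWeight B x y = B + #S - 1 := by
  have hS : 1 ≤ #S := card_pos.2 ⟨x, hx⟩
  simp only [edgeWeight]
  rw [← add_sum_erase S _ hx, sum_congr rfl fun y hy => if_neg (ne_of_mem_erase hy).symm,
    sum_const, card_erase_of_mem hx, nsmul_one, Nat.cast_sub hS, if_pos rfl]
  push_cast
  ring

def pathWeight (B : ℝ) {n : ℕ} (σ : Fin (n + 1) → α) : ℝ :=
  ∏ i : Fin n, edgeWeight B (σ i.castSucc) (σ i.succ)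

lemma pathWeight_nonneg (hB : 0 ≤ B) {n : ℕ} (σ : Fin (n + 1) → α) : 0 ≤ pathWeight B σ :=
  prod_nonneg fun _ _ => edgeWeight_nonneg hB _ _

@[simp]
lemma pathWeight_of_fin_one (σ : Fin 1 → α) : pathWeight B σ = 1 :=
  prod_of_isEmpty _

lemma pathWeight_cons {n : ℕ} (x : α) (τ : Fin (n + 1) → α) :
    pathWeight B (Fin.cons x τ : Fin (n + 2) → α) = edgeWeight B x (τ 0) * pathWeight B τ := by
  simp only [pathWeight, Fin.prod_univ_succ, ← Fin.succ_castSucc, Fin.cons_succ]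
  rfl

lemma mEdges_pathGraph {q n : ℕ} (σ : Fin (n + 1) → Fin q) :
    mEdges (SimpleGraph.pathGraph (n + 1)) σ = #{i : Fin n | σ i.castSucc = σ i.succ} := by
  refine (card_bij (fun i _ => s(i.castSucc, i.succ)) ?_ ?_ ?_).symm
  · intro i hi
    simp only [mem_filter, mem_univ, true_and] at hi
    simp [SimpleGraph.pathGraph_adj, hi]
  · intro i _ j _ hij
    simp only [Sym2.eq_iff, Fin.ext_iff, Fin.val_castSucc, Fin.val_succ] at hij
    ext; omega
  · have hstep : ∀ u v : Fin (n + 1), u.val + 1 = v.val → σ u = σ v →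
        ∃ i, ∃ (_ : i ∈ ({i | σ i.castSucc = σ i.succ} : Finset (Fin n))),
          s(i.castSucc, i.succ) = s(u, v) := by
      intro u v huv hσ
      have hu : u.val < n := by omega
      have hv : Fin.succ ⟨u, hu⟩ = v := Fin.ext (by simp [huv])
      exact ⟨⟨u, hu⟩, by simpa [hv] using hσ, by rw [hv]; rfl⟩
    intro e he
    induction e using Sym2.ind with
    | _ a b =>
      simp only [mem_filter, mem_univ, true_and, SimpleGraph.mem_edgeSet,
        SimpleGraph.pathGraph_adj] at he
      obtain ⟨hab | hba, hmono⟩ := he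
      · exact hstep a b hab (hmono a (Sym2.mem_mk_left a b) b (Sym2.mem_mk_right a b))
      · rw [Sym2.eq_swap]
        exact hstep b a hba (hmono b (Sym2.mem_mk_right a b) a (Sym2.mem_mk_left a b))

lemma pow_mEdges_pathGraph {q n : ℕ} (σ : Fin (n + 1) → Fin q) :
    B ^ mEdges (SimpleGraph.pathGraph (n + 1)) σ = pathWeight B σ := by
  rw [mEdges_pathGraph, ← prod_const, prod_filter]
  rfl

lemma sum_piFinset_pathWeight (S : Finset α) (n : ℕ) :
    ∑ σ ∈ Fintype.piFinset fun _ : Fin (n + 1) => S, pathWeight B σ =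
      #S * (B + #S - 1) ^ n := by
  induction n with
  | zero => simp
  | succ n ih =>
    calc ∑ σ ∈ Fintype.piFinset fun _ : Fin (n + 2) => S, pathWeight B σ
        = ∑ τ ∈ Fintype.piFinset fun _ : Fin (n + 1) => S,
            (∑ x ∈ S, edgeWeight B x (τ 0)) * pathWeight B τ := by
          rw [Fintype.sum_piFinset_fin_succ, sum_comm]
          simp only [pathWeight_cons, sum_mul]
      _ = (B + #S - 1) * ∑ τ ∈ Fintype.piFinset fun _ : Fin (n + 1) => S, pathWeight B τ := by
          rw [mul_sum]
          exact sum_congr rfl fun τ hτ => by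
            rw [sum_congr rfl fun x _ => edgeWeight_comm B x (τ 0),
              sum_edgeWeight_of_mem (Fintype.mem_piFinset.1 hτ 0)]
      _ = #S * (B + #S - 1) ^ (n + 1) := by rw [ih]; ring

variable [Fintype α]

def pinnedPartitionFunction (B : ℝ) (n : ℕ) (c c' : α) : ℝ :=
  ∑ σ : Fin (n + 1) → α with σ 0 = c ∧ σ (Fin.last n) = c', pathWeight B σ

lemma pinnedPartitionFunction_zero (c c' : α) :
    pinnedPartitionFunction B 0 c c' = if c = c' then 1 else 0 := by
  rw [pinnedPartitionFunction, sum_filter, Fintype.sum_fun_fin_succ]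
  by_cases h : c = c'
  · subst h; simp
  · simp [h, filter_eq_empty_iff]

lemma pinnedPartitionFunction_succ (n : ℕ) (c c' : α) :
    pinnedPartitionFunction B (n + 1) c c' =
      ∑ y, edgeWeight B c y * pinnedPartitionFunction B n y c' := by
  simp only [pinnedPartitionFunction, sum_filter, mul_sum]
  rw [Fintype.sum_fun_fin_succ]
  simp only [Fin.cons_zero, ← Fin.succ_last, Fin.cons_succ, pathWeight_cons, ite_and]
  conv_rhs => rw [sum_comm]
  simp

lemma mul_pow_le_pinnedPartitionFunction (hB₀ : 0 ≤ B) (hB₁ : B ≤ 1) (n : ℕ) (c c' : α) :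
    B * (B + Fintype.card α - 1) ^ n ≤ pinnedPartitionFunction B (n + 1) c c' := by
  induction n generalizing c with
  | zero =>
    simp only [pinnedPartitionFunction_succ, pinnedPartitionFunction_zero, mul_ite, mul_one,
      mul_zero, sum_ite_eq', mem_univ, if_true, pow_zero]
    unfold edgeWeight; split <;> linarith
  | succ n ih =>
    calc B * (B + Fintype.card α - 1) ^ (n + 1)
        = ∑ y, edgeWeight B c y * (B * (B + Fintype.card α - 1) ^ n) := by
          rw [← sum_mul, sum_edgeWeight_of_mem (mem_univ c), card_univ]; ring
      _ ≤ ∑ y, edgeWeight B c y * pinnedPartitionFunction B (n + 1) y c' := by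
          gcongr with y
          · exact edgeWeight_nonneg hB₀ c y
          · exact ih y
      _ = pinnedPartitionFunction B (n + 2) c c' := (pinnedPartitionFunction_succ _ c c').symm

lemma sum_pathWeight_bichromatic_le (hB : 0 ≤ B) (n : ℕ) (c : α) :
    ∑ σ : Fin (n + 1) → α with (∃ c₁ c₂, ∀ w, σ w = c₁ ∨ σ w = c₂) ∧ σ 0 = c, pathWeight B σ ≤
      Fintype.card α * (2 * (1 + B) ^ n) := by
  have hcover : ∀ σ ∈ ({σ | (∃ c₁ c₂, ∀ w, σ w = c₁ ∨ σ w = c₂) ∧ σ 0 = c} :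
      Finset (Fin (n + 1) → α)), ∃ y ∈ univ, σ ∈ Fintype.piFinset fun _ => {c, y} := by
    simp only [mem_filter, mem_univ, true_and, Fintype.mem_piFinset, mem_insert,
      mem_singleton]
    rintro σ ⟨⟨c₁, c₂, hσ⟩, rfl⟩
    rcases hσ 0 with h | h
    · exact ⟨c₂, fun w => h ▸ hσ w⟩
    · exact ⟨c₁, fun w => (hσ w).symm.imp_left (·.trans h.symm)⟩
  calc _ ≤ ∑ y, ∑ σ ∈ Fintype.piFinset fun _ => {c, y}, pathWeight B σ :=
        sum_le_sum_sum_of_forall_exists_mem (pathWeight_nonneg hB) hcover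
    _ ≤ ∑ _y : α, 2 * (1 + B) ^ n := by
        refine sum_le_sum fun y _ => ?_
        rw [sum_piFinset_pathWeight]
        have h₁ : (1 : ℝ) ≤ #{c, y} := by exact_mod_cast card_pos.2 ⟨c, mem_insert_self c _⟩
        have h₂ : (#{c, y} : ℝ) ≤ 2 := by exact_mod_cast card_le_two
        have h₃ : 0 ≤ B + #{c, y} - 1 := by linarith
        gcongr
        linarith
    _ = Fintype.card α * (2 * (1 + B) ^ n) := by simp

end PottsPath

open PottsPath

lemma pottsCond_pathGraph {q n : ℕ} (B : ℝ) (A C : Set (Fin (n + 1) → Fin q)) :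
    pottsCond (SimpleGraph.pathGraph (n + 1)) q B A C =
      (∑ σ with σ ∈ A ∧ σ ∈ C, pathWeight B σ) / ∑ σ with σ ∈ C, pathWeight B σ := by
  simp only [pottsCond, pow_mEdges_pathGraph, sum_filter]
  -- the `Fintype` instances differ: `pottsCond` sees a classical `DecidableEq (Fin (n + 1))`
  congr 1 <;> convert rfl

theorem stmt14 (q : ℕ) (B : ℝ) (hB : B ∈ Set.Ioo (0 : ℝ) 1)
    (ℓ : ℕ) (hℓ : 2 ≤ ℓ) (c c' : Fin q) :
    pottsCond (SimpleGraph.pathGraph ℓ) q B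
        {σ | ∃ c₁ c₂ : Fin q, ∀ w : Fin ℓ, σ w = c₁ ∨ σ w = c₂}
        {σ | σ ⟨0, by omega⟩ = c ∧ σ ⟨ℓ - 1, by omega⟩ = c'} ≤
      4 * q / B * ((1 + B) / (B + (q : ℝ) - 1)) ^ (ℓ - 2) := by
  obtain ⟨hB₀, hB₁⟩ := hB
  obtain ⟨n, rfl⟩ : ∃ n, ℓ = n + 2 := ⟨ℓ - 2, by omega⟩
  have hq : (1 : ℝ) ≤ q := by exact_mod_cast c.pos
  have hbase : 0 < B + q - 1 := by linarith
  have hZ := mul_pow_le_pinnedPartitionFunction hB₀.le hB₁.le n c c'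
  have hN := sum_pathWeight_bichromatic_le hB₀.le (n + 1) c
  rw [Fintype.card_fin] at hZ hN
  rw [pottsCond_pathGraph]
  -- also normalises the classical `Decidable` instances, so the denominator is
  -- `pinnedPartitionFunction B (n + 1) c c'` up to defeq
  simp only [Set.mem_ofPred_eq]
  refine (div_le_div₀ (by positivity) (le_trans ?_ hN) (mul_pos hB₀ (pow_pos hbase n)) hZ).trans ?_
  · refine sum_le_sum_of_subset_of_nonneg (fun σ => ?_) fun σ _ _ => pathWeight_nonneg hB₀.le σ
    simp only [mem_filter, mem_univ, true_and]
    exact fun ⟨hσ, h₀, _⟩ => ⟨hσ, h₀⟩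
  · rw [Nat.add_sub_cancel, div_pow, div_mul_div_comm, pow_succ]
    gcongr ?_ / _
    have : 0 ≤ (q : ℝ) * (1 + B) ^ n := by positivity
    nlinarith
end

section
/- Let B ∈ (0,1). Let T = (V,E) be a finite tree, Λ ⊆ V a subset of the vertices, and u a vertex of T. Let τ_1, τ_2 : Λ → {1,2} be two configurations on Λ which differ only on a subset U ⊆ Λ. Then |π_T(σ_u = 1 | σ_Λ = τ_1) − π_T(σ_u = 1 | σ_Λ = τ_2)| ≤ Σ_{v∈U} ((1−B)/(1+B))^{dist(u,v)}, where π_T is the Ising distribution on T with parameter B and dist(u,v) denotes the graph distance between u and v in T. -/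
open scoped Classical

/-!
Changing the boundary condition one site at a time, it suffices to bound the effect of the spin
at a single site `v` at distance `n` from `u`. Let `w` be the neighbour of `v` towards `u` and `S`
the side of `w` once the edge `vw` is removed. The weight `B ^ m(σ)` factorises across this bridge,
so `v` influences `u` only through the spin at `w`: `π(E | τ) = ∑ t, p_{τ v}(t) * g t`, where `g t`
is the conditional probability with `w` pinned to `t` and the constraints outside `S` dropped, and
`p_s(t) ∝ B ^ [s = t] * Y t` with `Y` independent of `τ v`. An elementary computation gives
`|p_0(0) - p_1(0)| ≤ (1 - B) / (1 + B)`, and `|g 0 - g 1| ≤ ((1 - B) / (1 + B)) ^ (n - 1)` by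
induction along the path from `v` to `u`.
-/

open Function Set

section
variable {ι α : Type*} {A : Set ι}

lemma DependsOn.mem_inter {C D : Set (ι → α)} (hC : DependsOn (· ∈ C) A)
    (hD : DependsOn (· ∈ D) A) : DependsOn (· ∈ C ∩ D) A :=
  fun _ _ h => congrArg₂ And (hC h) (hD h)

lemma dependsOn_mem_setOf_apply_eq {x : ι} (hx : x ∈ A) (a : α) :
    DependsOn (· ∈ {σ : ι → α | σ x = a}) A :=
  fun _ _ h => by simp [h x hx]

lemma dependsOn_mem_setOf_eqOn (τ : ι → α) : DependsOn (· ∈ {σ | EqOn σ τ A}) A :=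
  fun σ σ' h => propext <| forall₂_congr fun x hx => by rw [h x hx]

lemma setOf_eqOn_congr {τ τ' : ι → α} (h : EqOn τ τ' A) :
    {σ | EqOn σ τ A} = {σ | EqOn σ τ' A} := by
  ext σ
  exact ⟨fun hσ => hσ.trans h, fun hσ => hσ.trans h.symm⟩

lemma DependsOn.indicator {M : Type*} [Zero M] {C : Set (ι → α)} {f : (ι → α) → M}
    (hC : DependsOn (· ∈ C) A) (hf : DependsOn f A) : DependsOn (C.indicator f) A := by
  intro σ σ' h
  simp only [Set.indicator_apply, hC h, hf h]

lemma card_mul_sum_mul_eq_sum_mul_sum [Fintype ι] [Fintype α] {R : Type*} [CommSemiring R]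
    {F G : (ι → α) → R} (hF : DependsOn F A) (hG : DependsOn G Aᶜ) :
    (Fintype.card (ι → α) : R) * ∑ σ, F σ * G σ = (∑ σ, F σ) * ∑ σ, G σ := by
  set φ : (ι → α) × (ι → α) → (ι → α) × (ι → α) :=
    fun p => (A.piecewise p.1 p.2, A.piecewise p.2 p.1)
  have hφ : Involutive φ := by
    rintro ⟨a, b⟩
    ext i <;> by_cases hi : i ∈ A <;> simp [φ, hi]
  calc (Fintype.card (ι → α) : R) * ∑ σ, F σ * G σ
      = ∑ p : (ι → α) × (ι → α), F p.1 * G p.1 := by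
        simp [Fintype.sum_prod_type, Finset.mul_sum]
    _ = ∑ p, F (φ p).1 * G (φ p).2 := by
        refine Fintype.sum_congr _ _ fun p => ?_
        rw [hF (x := (φ p).1) (y := p.1) fun i hi => by simp [φ, hi],
          hG (x := (φ p).2) (y := p.1) fun i hi => piecewise_eq_of_notMem _ _ _ hi]
    _ = ∑ p : (ι → α) × (ι → α), F p.1 * G p.2 :=
        Equiv.sum_comp hφ.toPerm (fun p => F p.1 * G p.2)
    _ = (∑ σ, F σ) * ∑ σ, G σ := by rw [Finset.sum_mul_sum, Fintype.sum_prod_type]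
end

namespace SimpleGraph

variable {V : Type}

structure IsBridgeSide (G : SimpleGraph V) (v w : V) (S : Set V) : Prop where
  adj : G.Adj v w
  left_notMem : v ∉ S
  right_mem : w ∈ S
  mem_iff_mem_of_adj : ∀ ⦃x y⦄, G.Adj x y → s(x, y) ≠ s(v, w) → (x ∈ S ↔ y ∈ S)

variable {G : SimpleGraph V} {v w : V} {S : Set V}

lemma IsBridgeSide.symm (h : G.IsBridgeSide v w S) : G.IsBridgeSide w v Sᶜ where
  adj := h.adj.symm
  left_notMem := not_not.mpr h.right_mem
  right_mem := h.left_notMem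
  mem_iff_mem_of_adj x y hxy hne :=
    not_congr (h.mem_iff_mem_of_adj hxy fun he => hne (by rw [he, Sym2.eq_swap]))

end SimpleGraph

section
variable {V : Type} [Fintype V] {q : ℕ}

noncomputable def mEdgesOn (G : SimpleGraph V) (A : Set V) (σ : V → Fin q) : ℕ :=
  (Finset.univ.filter fun e : Sym2 V =>
    e ∈ G.edgeSet ∧ (∀ x ∈ e, x ∈ A) ∧ ∀ x ∈ e, ∀ y ∈ e, σ x = σ y).card

lemma mEdgesOn_univ (G : SimpleGraph V) (σ : V → Fin q) : mEdgesOn G univ σ = mEdges G σ := by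
  simp [mEdgesOn, mEdges]

lemma dependsOn_mEdgesOn (G : SimpleGraph V) (A : Set V) :
    DependsOn (mEdgesOn G A (q := q)) A := by
  intro σ σ' h
  unfold mEdgesOn
  congr 1
  refine Finset.filter_congr fun e _ => and_congr_right fun _ => and_congr_right fun hA => ?_
  exact forall₂_congr fun x hx => forall₂_congr fun y hy => by rw [h x (hA x hx), h y (hA y hy)]

noncomputable def pottsZ (G : SimpleGraph V) (B : ℝ) (A : Set V) (C : Set (V → Fin q)) : ℝ :=
  ∑ σ, C.indicator (fun σ => B ^ mEdgesOn G A σ) σ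

variable {G : SimpleGraph V} {B : ℝ} {A : Set V} {C D : Set (V → Fin q)}

lemma pottsCond_eq_div (G : SimpleGraph V) (B : ℝ) (E C : Set (V → Fin q)) :
    pottsCond G q B E C = pottsZ G B univ (E ∩ C) / pottsZ G B univ C := by
  simp [pottsCond, pottsZ, Set.indicator_apply, mEdgesOn_univ]

lemma pottsZ_nonneg (hB : 0 ≤ B) : 0 ≤ pottsZ G B A C :=
  Finset.sum_nonneg fun _ _ => indicator_nonneg (fun _ _ => pow_nonneg hB _) _

lemma pottsZ_pos (hB : 0 < B) (hC : C.Nonempty) : 0 < pottsZ G B A C := by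
  obtain ⟨σ, hσ⟩ := hC
  refine Finset.sum_pos' (fun _ _ => indicator_nonneg (fun _ _ => (pow_pos hB _).le) _)
    ⟨σ, Finset.mem_univ _, ?_⟩
  simpa [indicator_of_mem hσ] using pow_pos hB _

lemma pottsZ_mono (hB : 0 ≤ B) (h : C ⊆ D) : pottsZ G B A C ≤ pottsZ G B A D :=
  Finset.sum_le_sum fun _ _ => indicator_le_indicator_of_subset h (fun _ => pow_nonneg hB _) _

lemma pottsZ_empty : pottsZ G B A (∅ : Set (V → Fin q)) = 0 := by
  simp [pottsZ]

lemma pottsZ_eq_sum_inter (x : V) :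
    pottsZ G B A C = ∑ t, pottsZ G B A (C ∩ {σ | σ x = t}) := by
  simp only [pottsZ]
  rw [Finset.sum_comm]
  refine Fintype.sum_congr _ _ fun σ => ?_
  by_cases hσ : σ ∈ C <;> simp [Set.indicator_apply, hσ]

lemma pottsCond_mem_Icc (hB : 0 ≤ B) (E C : Set (V → Fin q)) : pottsCond G q B E C ∈ Icc 0 1 := by
  rw [pottsCond_eq_div]
  exact ⟨div_nonneg (pottsZ_nonneg hB) (pottsZ_nonneg hB),
    div_le_one_of_le₀ (pottsZ_mono hB inter_subset_right) (pottsZ_nonneg hB)⟩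

lemma dependsOn_pow_mEdgesOn (G : SimpleGraph V) (B : ℝ) (A : Set V) :
    DependsOn (fun σ : V → Fin q => B ^ mEdgesOn G A σ) A :=
  fun _ _ h => congrArg (B ^ ·) (dependsOn_mEdgesOn G A h)

namespace SimpleGraph.IsBridgeSide

variable {v w : V} {S : Set V}

lemma mEdges_eq (h : G.IsBridgeSide v w S) (σ : V → Fin q) :
    mEdges G σ = mEdgesOn G S σ + mEdgesOn G Sᶜ σ + if σ v = σ w then 1 else 0 := by
  have hvw : (if σ v = σ w then 1 else 0) =
      ∑ e : Sym2 V, if e = s(v, w) then (if σ v = σ w then 1 else 0) else 0 := by simp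
  rw [mEdges, mEdgesOn, mEdgesOn, hvw, Finset.card_filter, Finset.card_filter,
    Finset.card_filter, ← Finset.sum_add_distrib, ← Finset.sum_add_distrib]
  refine Finset.sum_congr rfl fun e _ => ?_
  induction e using Sym2.ind with
  | _ a b =>
  simp only [mem_edgeSet, Sym2.mem_iff, forall_eq_or_imp, forall_eq, Sym2.eq_iff, mem_compl_iff]
  by_cases he : a = v ∧ b = w ∨ a = w ∧ b = v
  · rcases he with ⟨rfl, rfl⟩ | ⟨rfl, rfl⟩ <;>
      simp [h.adj, h.adj.symm, h.left_notMem, h.right_mem, eq_comm]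
  by_cases hab : G.Adj a b
  · have hS := h.mem_iff_mem_of_adj hab (by simpa [Sym2.eq_iff] using he)
    by_cases ha : a ∈ S <;> simp [he, hab, ha, ← hS]
  · simp [he, hab]

lemma card_mul_pottsZ_pinned (h : G.IsBridgeSide v w S) (B : ℝ) {Q R : Set (V → Fin q)}
    (hQ : DependsOn (· ∈ Q) S) (hR : DependsOn (· ∈ R) Sᶜ) (s t : Fin q) :
    (Fintype.card (V → Fin q) : ℝ) *
        pottsZ G B univ (Q ∩ {σ | σ w = t} ∩ (R ∩ {σ | σ v = s})) =
      B ^ (if s = t then 1 else 0) *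
        (pottsZ G B S (Q ∩ {σ | σ w = t}) * pottsZ G B Sᶜ (R ∩ {σ | σ v = s})) := by
  have hpt : ∀ σ, (Q ∩ {σ | σ w = t} ∩ (R ∩ {σ | σ v = s})).indicator
      (fun σ => B ^ mEdgesOn G univ σ) σ = B ^ (if s = t then 1 else 0) *
        ((Q ∩ {σ | σ w = t}).indicator (fun σ => B ^ mEdgesOn G S σ) σ *
          (R ∩ {σ | σ v = s}).indicator (fun σ => B ^ mEdgesOn G Sᶜ σ) σ) := by
    intro σ
    rw [← inter_indicator_mul]
    by_cases hσ : σ ∈ Q ∩ {σ | σ w = t} ∩ (R ∩ {σ | σ v = s})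
    · have hw : σ w = t := hσ.1.2
      have hv : σ v = s := hσ.2.2
      rw [indicator_of_mem hσ, indicator_of_mem hσ, mEdgesOn_univ, h.mEdges_eq, hv, hw]
      ring
    · simp [indicator_of_notMem hσ]
  simp only [pottsZ, hpt, ← Finset.mul_sum]
  rw [mul_left_comm, card_mul_sum_mul_eq_sum_mul_sum]
  · exact (hQ.mem_inter (dependsOn_mem_setOf_apply_eq h.right_mem t)).indicator
      (dependsOn_pow_mEdgesOn G B S)
  · exact (hR.mem_inter (dependsOn_mem_setOf_apply_eq h.left_notMem s)).indicator
      (dependsOn_pow_mEdgesOn G B Sᶜ)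

lemma card_mul_pottsZ_inter (h : G.IsBridgeSide v w S) (B : ℝ) {Q R : Set (V → Fin q)}
    (hQ : DependsOn (· ∈ Q) S) (hR : DependsOn (· ∈ R) Sᶜ) {s : Fin q}
    (hRv : R ⊆ {σ | σ v = s}) :
    (Fintype.card (V → Fin q) : ℝ) * pottsZ G B univ (Q ∩ R) =
      pottsZ G B Sᶜ R * ∑ t, B ^ (if s = t then 1 else 0) * pottsZ G B S (Q ∩ {σ | σ w = t}) := by
  rw [pottsZ_eq_sum_inter w, Finset.mul_sum, Finset.mul_sum]
  refine Fintype.sum_congr _ _ fun t => ?_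
  rw [inter_right_comm, ← inter_eq_left.mpr hRv, h.card_mul_pottsZ_pinned B hQ hR]
  ring

lemma pottsCond_setOf_eqOn_eq (h : G.IsBridgeSide v w S) (hB : 0 < B) {E : Set (V → Fin q)}
    (hE : DependsOn (· ∈ E) S) {Λ : Set V} (hv : v ∈ Λ) (τ : V → Fin q) :
    pottsCond G q B E {σ | EqOn σ τ Λ} =
      (∑ t, B ^ (if τ v = t then 1 else 0) *
          pottsZ G B S (E ∩ {σ | EqOn σ τ (Λ ∩ S)} ∩ {σ | σ w = t})) /
        ∑ t, B ^ (if τ v = t then 1 else 0) *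
          pottsZ G B S ({σ | EqOn σ τ (Λ ∩ S)} ∩ {σ | σ w = t}) := by
  have hsplit : {σ | EqOn σ τ Λ} = {σ | EqOn σ τ (Λ ∩ S)} ∩ {σ | EqOn σ τ (Λ \ S)} := by
    ext σ
    simp only [mem_inter_iff, mem_ofPred_eq, ← eqOn_union, inter_union_sdiff]
  have hQ : DependsOn (· ∈ {σ | EqOn σ τ (Λ ∩ S)}) S :=
    (dependsOn_mem_setOf_eqOn τ).mono inter_subset_right
  have hR : DependsOn (· ∈ {σ | EqOn σ τ (Λ \ S)}) Sᶜ :=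
    (dependsOn_mem_setOf_eqOn τ).mono fun _ hx => hx.2
  have hRv : {σ | EqOn σ τ (Λ \ S)} ⊆ {σ | σ v = τ v} := fun _ hσ => hσ ⟨hv, h.left_notMem⟩
  have hcard : (0 : ℝ) < Fintype.card (V → Fin q) := by
    exact_mod_cast Fintype.card_pos_iff.mpr ⟨τ⟩
  have hRpos : 0 < pottsZ G B Sᶜ {σ | EqOn σ τ (Λ \ S)} := pottsZ_pos hB ⟨τ, fun _ _ => rfl⟩
  rw [pottsCond_eq_div, hsplit, ← inter_assoc, ← mul_div_mul_left _ _ hcard.ne',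
    h.card_mul_pottsZ_inter B (hE.mem_inter hQ) hR hRv, h.card_mul_pottsZ_inter B hQ hR hRv,
    mul_div_mul_left _ _ hRpos.ne']

lemma pottsCond_eq_div_of_dependsOn (h : G.IsBridgeSide v w S) (hB : 0 < B)
    {E C : Set (V → Fin q)} (hE : DependsOn (· ∈ E) S) (hC : DependsOn (· ∈ C) S) {t : Fin q}
    (hCw : C ⊆ {σ | σ w = t}) :
    pottsCond G q B E C = pottsZ G B S (E ∩ C) / pottsZ G B S C := by
  set K := ∑ s, B ^ (if t = s then 1 else 0) * pottsZ G B Sᶜ {σ | σ v = s}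
  have hK : 0 < K := Finset.sum_pos
    (fun s _ => mul_pos (pow_pos hB _) (pottsZ_pos hB ⟨fun _ => s, rfl⟩))
    ⟨t, Finset.mem_univ t⟩
  have hcard : (0 : ℝ) < Fintype.card (V → Fin q) := by
    exact_mod_cast Fintype.card_pos_iff.mpr ⟨fun _ => t⟩
  have key : ∀ D ⊆ C, DependsOn (· ∈ D) S →
      (Fintype.card (V → Fin q) : ℝ) * pottsZ G B univ D = pottsZ G B S D * K := by
    intro D hD hDS
    simpa only [univ_inter, compl_compl] using
      h.symm.card_mul_pottsZ_inter B (Q := univ) (R := D) (fun _ _ _ => rfl)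
        (by rwa [compl_compl]) (hD.trans hCw)
  rw [pottsCond_eq_div, ← mul_div_mul_left _ _ hcard.ne', key _ inter_subset_right
    (hE.mem_inter hC), key C subset_rfl hC, mul_div_mul_right _ _ hK.ne']

lemma pottsZ_inter_eq_pottsCond_mul (h : G.IsBridgeSide v w S) (hB : 0 < B)
    {E : Set (V → Fin q)} (hE : DependsOn (· ∈ E) S) {K : Set V} (hK : K ⊆ S)
    (τ : V → Fin q) (t : Fin q) :
    pottsZ G B S (E ∩ {σ | EqOn σ τ K} ∩ {σ | σ w = t}) =
      pottsCond G q B E {σ | EqOn σ (update τ w t) (insert w K)} *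
        pottsZ G B S ({σ | EqOn σ τ K} ∩ {σ | σ w = t}) := by
  rw [inter_assoc]
  by_cases hτ : w ∈ K → τ w = t
  · have hpin : {σ | EqOn σ τ K} ∩ {σ | σ w = t} = {σ | EqOn σ (update τ w t) (insert w K)} := by
      ext σ
      constructor
      · rintro ⟨hσ, hσw⟩ x hx
        rcases eq_or_ne x w with rfl | hxw
        · simpa using hσw
        · rw [update_of_ne hxw]
          exact hσ (mem_of_mem_insert_of_ne hx hxw)
      · intro hσ
        refine ⟨fun x hx => ?_, by simpa using hσ (mem_insert w K)⟩
        rcases eq_or_ne x w with rfl | hxw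
        · simpa [hτ hx] using hσ (mem_insert x K)
        · simpa [hxw] using hσ (mem_insert_of_mem w hx)
    have hpos : 0 < pottsZ G B S {σ | EqOn σ (update τ w t) (insert w K)} :=
      pottsZ_pos hB ⟨_, fun _ _ => rfl⟩
    rw [hpin, h.pottsCond_eq_div_of_dependsOn hB hE
      ((dependsOn_mem_setOf_eqOn _).mono (insert_subset h.right_mem hK))
      (fun σ hσ => by simpa using hσ (mem_insert w K)), div_mul_cancel₀ _ hpos.ne']
  · have hempty : {σ | EqOn σ τ K} ∩ {σ | σ w = t} = ∅ := by
      push Not at hτ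
      exact eq_empty_of_forall_notMem fun σ hσ => hτ.2 ((hσ.1 hτ.1).symm.trans hσ.2)
    rw [hempty, inter_empty, pottsZ_empty, mul_zero]

end SimpleGraph.IsBridgeSide
end

lemma ising_edge_contraction {B : ℝ} (hB0 : 0 < B) (hB1 : B ≤ 1) {a b : ℝ} (ha : 0 ≤ a)
    (hb : 0 ≤ b) (g₀ g₁ : ℝ) :
    |(B * (g₀ * a) + g₁ * b) / (B * a + b) - (g₀ * a + B * (g₁ * b)) / (a + B * b)| ≤
      (1 - B) / (1 + B) * |g₀ - g₁| := by
  have hc : 0 ≤ (1 - B) / (1 + B) := div_nonneg (by linarith) (by linarith)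
  rcases ha.eq_or_lt with rfl | ha
  · simp only [mul_zero, zero_add]
    rw [mul_div_mul_left _ _ hB0.ne', sub_self, abs_zero]
    exact mul_nonneg hc (abs_nonneg _)
  rcases hb.eq_or_lt with rfl | hb
  · simp only [mul_zero, add_zero]
    rw [mul_div_mul_left _ _ hB0.ne', sub_self, abs_zero]
    exact mul_nonneg hc (abs_nonneg _)
  have hD₀ : 0 < B * a + b := by positivity
  have hD₁ : 0 < a + B * b := by positivity
  have hdiff : (B * (g₀ * a) + g₁ * b) / (B * a + b) - (g₀ * a + B * (g₁ * b)) / (a + B * b) =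
      (1 - B ^ 2) * a * b / ((B * a + b) * (a + B * b)) * (g₁ - g₀) := by
    field_simp
    ring
  have hcoef : (1 - B ^ 2) * a * b / ((B * a + b) * (a + B * b)) ≤ (1 - B) / (1 + B) := by
    -- `(B a + b) (a + B b) ≥ (1 + B)² a b` by AM-GM
    rw [div_le_div_iff₀ (by positivity) (by linarith)]
    nlinarith [mul_nonneg (mul_nonneg (sub_nonneg.mpr hB1) hB0.le) (sq_nonneg (a - b))]
  have hcoef₀ : 0 ≤ (1 - B ^ 2) * a * b / ((B * a + b) * (a + B * b)) := by
    have : B ^ 2 ≤ 1 := by nlinarith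
    have : 0 ≤ 1 - B ^ 2 := by linarith
    positivity
  rw [hdiff, abs_mul, abs_of_nonneg hcoef₀, abs_sub_comm]
  exact mul_le_mul_of_nonneg_right hcoef (abs_nonneg _)

lemma abs_sum_div_sum_sub_le {B : ℝ} (hB0 : 0 < B) (hB1 : B ≤ 1) {y : Fin 2 → ℝ}
    (hy : ∀ t, 0 ≤ y t) (g : Fin 2 → ℝ) (s s' : Fin 2) :
    |(∑ t, B ^ (if s = t then 1 else 0) * (g t * y t)) / ∑ t, B ^ (if s = t then 1 else 0) * y t -
        (∑ t, B ^ (if s' = t then 1 else 0) * (g t * y t)) /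
          ∑ t, B ^ (if s' = t then 1 else 0) * y t| ≤
      (1 - B) / (1 + B) * |g 0 - g 1| := by
  have h := ising_edge_contraction hB0 hB1 (hy 0) (hy 1) (g 0) (g 1)
  have hc : 0 ≤ (1 - B) / (1 + B) * |g 0 - g 1| :=
    mul_nonneg (div_nonneg (by linarith) (by linarith)) (abs_nonneg _)
  fin_cases s <;> fin_cases s' <;> simp [Fin.sum_univ_two, hc, h, abs_sub_comm]

namespace SimpleGraph

variable {V : Type} {T : SimpleGraph V}

lemma IsTree.exists_isBridgeSide (hT : T.IsTree) {u v : V} {m : ℕ} (hd : T.dist v u = m + 1) :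
    ∃ w S, T.IsBridgeSide v w S ∧ u ∈ S ∧ T.dist w u = m := by
  obtain ⟨p, hp, hlen⟩ := hT.connected.exists_path_of_dist v u
  cases p with
  | nil => simp_all
  | @cons _ w _ hvw q =>
    rw [Walk.cons_isPath_iff] at hp
    have hq : q.length = m := by simp only [Walk.length_cons] at hlen; omega
    refine ⟨w, {x | (T.deleteEdges {s(v, w)}).Reachable w x},
      ⟨hvw, fun hr => isAcyclic_iff_forall_adj_isBridge.mp hT.isAcyclic hvw hr.symm,
        Reachable.refl w, fun x y hxy hne => ?_⟩, ?_, ?_⟩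
    · have hxy' : (T.deleteEdges {s(v, w)}).Adj x y := by simp [hxy, hne]
      exact ⟨fun hx => hx.trans hxy'.reachable, fun hy => hy.trans hxy'.symm.reachable⟩
    · refine ⟨q.toDeleteEdges {s(v, w)} fun e he hev => hp.2 ?_⟩
      rw [mem_singleton_iff] at hev
      subst hev
      exact q.fst_mem_support_of_mem_edges he
    · refine le_antisymm (hq ▸ dist_le q) ?_
      have := hT.connected.dist_triangle (u := v) (v := w) (w := u)
      rw [dist_eq_one_iff_adj.mpr hvw] at this
      omega

variable [Fintype V] {B : ℝ}

theorem IsTree.abs_pottsCond_sub_update_le (hT : T.IsTree) (hB0 : 0 < B) (hB1 : B ≤ 1)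
    {E : Set (V → Fin 2)} {u : V} (hE : DependsOn (· ∈ E) {u}) (Λ : Set V) (τ : V → Fin 2)
    (v : V) (a : Fin 2) :
    |pottsCond T 2 B E {σ | EqOn σ τ Λ} - pottsCond T 2 B E {σ | EqOn σ (update τ v a) Λ}| ≤
      ((1 - B) / (1 + B)) ^ T.dist v u := by
  rcases em' (v ∈ Λ) with hv | hv
  · rw [setOf_eqOn_congr (fun x hx => (update_of_ne (ne_of_mem_of_not_mem hx hv) a τ).symm),
      sub_self, abs_zero]
    exact pow_nonneg (div_nonneg (by linarith) (by linarith)) _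
  obtain ⟨n, hn⟩ : ∃ n, T.dist v u = n := ⟨_, rfl⟩
  rw [hn]
  induction n generalizing Λ τ v a with
  | zero =>
    have h₁ := pottsCond_mem_Icc (G := T) hB0.le E {σ | EqOn σ τ Λ}
    have h₂ := pottsCond_mem_Icc (G := T) hB0.le E {σ | EqOn σ (update τ v a) Λ}
    rw [pow_zero, abs_sub_le_iff]
    constructor <;> linarith [h₁.1, h₁.2, h₂.1, h₂.2]
  | succ m ih =>
    obtain ⟨w, S, hS, hu, hw⟩ := hT.exists_isBridgeSide hn
    have hES : DependsOn (· ∈ E) S := hE.mono (singleton_subset_iff.mpr hu)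
    set g : Fin 2 → ℝ := fun t =>
      pottsCond T 2 B E {σ | EqOn σ (update τ w t) (insert w (Λ ∩ S))}
    have hg : |g 0 - g 1| ≤ ((1 - B) / (1 + B)) ^ m := by
      simpa [g] using ih (insert w (Λ ∩ S)) (update τ w 0) w 1 (mem_insert _ _) hw
    have hτS : EqOn (update τ v a) τ (Λ ∩ S) := fun x hx =>
      update_of_ne (ne_of_mem_of_not_mem hx.2 hS.left_notMem) a τ
    rw [hS.pottsCond_setOf_eqOn_eq hB0 hES hv, hS.pottsCond_setOf_eqOn_eq hB0 hES hv,
      setOf_eqOn_congr hτS]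
    simp only [hS.pottsZ_inter_eq_pottsCond_mul hB0 hES inter_subset_right]
    calc _ ≤ (1 - B) / (1 + B) * |g 0 - g 1| :=
          abs_sum_div_sum_sub_le hB0 hB1 (fun t => pottsZ_nonneg hB0.le) g _ _
      _ ≤ (1 - B) / (1 + B) * ((1 - B) / (1 + B)) ^ m := by gcongr
      _ = ((1 - B) / (1 + B)) ^ (m + 1) := (pow_succ' _ _).symm

end SimpleGraph

lemma abs_sub_le_sum_of_abs_sub_update_le {ι α : Type*} [DecidableEq ι] (F : (ι → α) → ℝ)
    (c : ι → ℝ) (hF : ∀ τ i a, |F τ - F (update τ i a)| ≤ c i) (U : Finset ι) {τ τ' : ι → α}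
    (h : ∀ i ∉ U, τ i = τ' i) : |F τ - F τ'| ≤ ∑ i ∈ U, c i := by
  induction U using Finset.induction_on generalizing τ with
  | empty => simp [funext fun i => h i (Finset.notMem_empty i)]
  | insert i U hi ih =>
    have h' : ∀ j ∉ U, update τ i (τ' i) j = τ' j := by
      intro j hj
      rcases eq_or_ne j i with rfl | hji
      · simp
      · rw [update_of_ne hji]
        exact h j (by simp [hj, hji])
    rw [Finset.sum_insert hi]
    calc |F τ - F τ'| ≤ |F τ - F (update τ i (τ' i))| + |F (update τ i (τ' i)) - F τ'| :=
          abs_sub_le _ _ _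
      _ ≤ c i + ∑ j ∈ U, c j := add_le_add (hF _ _ _) (ih h')

theorem stmt18_general {V : Type} [Fintype V] (B : ℝ) (hB : B ∈ Set.Ioo (0 : ℝ) 1)
    (T : SimpleGraph V) (hT : T.IsTree) (u : V) (Λ : Finset V)
    (U : Finset V)
    (τ₁ τ₂ : ↥Λ → Fin 2) (hdiff : ∀ x : ↥Λ, (x : V) ∉ U → τ₁ x = τ₂ x) :
    |pottsCond T 2 B {σ | σ u = 0} {σ | ∀ x : ↥Λ, σ x = τ₁ x} -
        pottsCond T 2 B {σ | σ u = 0} {σ | ∀ x : ↥Λ, σ x = τ₂ x}| ≤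
      ∑ v ∈ U, ((1 - B) / (1 + B)) ^ (T.dist u v) := by
  set extend : (↥Λ → Fin 2) → V → Fin 2 := fun τ x => if hx : x ∈ Λ then τ ⟨x, hx⟩ else 0
  have hset : ∀ τ, {σ : V → Fin 2 | ∀ x : ↥Λ, σ x = τ x} = {σ | EqOn σ (extend τ) Λ} := by
    intro τ
    ext σ
    exact ⟨fun hσ x hx => by simp [extend, Finset.mem_coe.mp hx, hσ ⟨x, hx⟩],
      fun hσ x => by simpa [extend] using hσ x.2⟩
  rw [hset, hset]
  simp_rw [T.dist_comm (u := u)]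
  refine abs_sub_le_sum_of_abs_sub_update_le _ _ (fun τ v a => hT.abs_pottsCond_sub_update_le
    hB.1 hB.2.le (dependsOn_mem_setOf_apply_eq (mem_singleton u) 0) _ τ v a) U fun x hx => ?_
  by_cases hxΛ : x ∈ Λ
  · simp [extend, hxΛ, hdiff ⟨x, hxΛ⟩ hx]
  · simp [extend, hxΛ]

theorem stmt18 {V : Type} [Fintype V] (B : ℝ) (hB : B ∈ Set.Ioo (0 : ℝ) 1)
    (T : SimpleGraph V) (hT : T.IsTree) (u : V) (Λ : Finset V)
    (U : Finset V) (hUΛ : U ⊆ Λ)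
    (τ₁ τ₂ : ↥Λ → Fin 2) (hdiff : ∀ x : ↥Λ, (x : V) ∉ U → τ₁ x = τ₂ x) :
    |pottsCond T 2 B {σ | σ u = 0} {σ | ∀ x : ↥Λ, σ x = τ₁ x} -
        pottsCond T 2 B {σ | σ u = 0} {σ | ∀ x : ↥Λ, σ x = τ₂ x}| ≤
      ∑ v ∈ U, ((1 - B) / (1 + B)) ^ (T.dist u v) :=
  stmt18_general B hB T hT u Λ U τ₁ τ₂ hdiff
end
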